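/- If there exists an even positive integer n for which the minimal positive integer K satisfying the large-squares property for n equals K̃, then there are infinitely many positive integers (namely all 4^α·n for α ≥ 0) for which the minimal such K equals K̃. -/

import Mathlib

/-!
Doubling every square multiplies `m` by `4` and preserves the large-squares property for the same
`K`. Conversely, if `m` is even then `4 * m ≡ 0 (mod 8)`; since odd squares are `1 (mod 8)` and even
squares are `0 (mod 4)`, every representation of `4 * m` as a sum of four squares uses only even
numbers, and halving them gives a representation of `m` with the same constant. Hence `m` and
`4 * m` have the same minimal constant whenever `m` is even, and so do all the numbers `4 ^ α * n`.
-/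

/-- `m` has the large-squares property with positive integer constant `K`. -/
def LargeSquares (K m : ℕ) : Prop :=
  ∃ a : Fin 4 → ℕ, (∑ i, (a i) ^ 2 = m) ∧
    ∀ i, a i = 0 ∨ m ≤ K ^ 2 * (a i) ^ 2

/-- `K` is the minimal positive integer constant for `m`. -/
def MinimalConst (K m : ℕ) : Prop :=
  0 < K ∧ LargeSquares K m ∧ ∀ K', 0 < K' → LargeSquares K' m → K ≤ K'

lemma Nat.sq_mod_eight (a : ℕ) : a % 2 = 1 ∧ a ^ 2 % 8 = 1 ∨ a % 2 = 0 ∧ a ^ 2 % 4 = 0 := by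
  have hsq : a ^ 2 % 8 = (a % 8) ^ 2 % 8 := Nat.pow_mod a 2 8
  have hlt : a % 8 < 8 := Nat.mod_lt a (by norm_num)
  interval_cases hr : a % 8 <;> omega

lemma even_of_sum_four_sq_eq_eight_mul {a : Fin 4 → ℕ} {k : ℕ} (h : ∑ i, a i ^ 2 = 8 * k)
    (i : Fin 4) : Even (a i) := by
  rw [Fin.sum_univ_four] at h
  have h0 := Nat.sq_mod_eight (a 0)
  have h1 := Nat.sq_mod_eight (a 1)
  have h2 := Nat.sq_mod_eight (a 2)
  have h3 := Nat.sq_mod_eight (a 3)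
  rw [Nat.even_iff]
  fin_cases i <;> simp only [Fin.zero_eta, Fin.mk_one, Fin.reduceFinMk] <;> omega

namespace LargeSquares

variable {K m : ℕ}

lemma sq_mul (c : ℕ) (h : LargeSquares K m) : LargeSquares K (c ^ 2 * m) := by
  obtain ⟨a, hsum, hlarge⟩ := h
  refine ⟨fun i => c * a i, ?_, fun i => ?_⟩
  · simp only [mul_pow, ← Finset.mul_sum, hsum]
  · rcases hlarge i with h0 | hle
    · simp [h0]
    · right
      calc c ^ 2 * m ≤ c ^ 2 * (K ^ 2 * a i ^ 2) := Nat.mul_le_mul_left _ hle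
        _ = K ^ 2 * (c * a i) ^ 2 := by ring

lemma of_four_mul (hm : Even m) (h : LargeSquares K (4 * m)) : LargeSquares K m := by
  obtain ⟨k, rfl⟩ := hm
  obtain ⟨a, hsum, hlarge⟩ := h
  have heven := even_of_sum_four_sq_eq_eight_mul (k := k) (by rw [hsum]; ring)
  obtain ⟨b, rfl⟩ : ∃ b : Fin 4 → ℕ, a = fun i => 2 * b i :=
    ⟨fun i => a i / 2, funext fun i => (Nat.two_mul_div_two_of_even (heven i)).symm⟩
  dsimp only at hsum hlarge
  refine ⟨b, ?_, fun i => ?_⟩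
  · simp only [mul_pow, ← Finset.mul_sum] at hsum
    omega
  · rcases hlarge i with h0 | hle
    · left; omega
    · right
      have : K ^ 2 * (2 * b i) ^ 2 = 4 * (K ^ 2 * b i ^ 2) := by ring
      omega

end LargeSquares

lemma MinimalConst.four_mul {K m : ℕ} (hm : Even m) (h : MinimalConst K m) :
    MinimalConst K (4 * m) :=
  ⟨h.1, h.2.1.sq_mul 2, fun K' hK' hK'm => h.2.2 K' hK' (hK'm.of_four_mul hm)⟩

lemma MinimalConst.four_pow_mul {K m : ℕ} (hm : Even m) (h : MinimalConst K m) (α : ℕ) :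
    MinimalConst K (4 ^ α * m) := by
  induction α with
  | zero => simpa using h
  | succ α ih =>
    rw [pow_succ', mul_assoc]
    exact ih.four_mul (hm.mul_left _)

theorem minimal_const_infinite (Kmin n : ℕ) (hn : 0 < n) (hev : Even n)
    (hmin : MinimalConst Kmin n) :
    {m : ℕ | 0 < m ∧ MinimalConst Kmin m}.Infinite := by
  refine Set.infinite_of_injective_forall_mem (f := fun α : ℕ => 4 ^ α * n) ?_
    fun α => ⟨by positivity, hmin.four_pow_mul hev α⟩
  intro α β h
  exact Nat.pow_right_injective (by norm_num) (Nat.eq_of_mul_eq_mul_right hn h)
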